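/- Let x ∈ {0,1}^n be a bit string with exactly k zero-bits, and suppose y is obtained from x by flipping a uniformly random set of exactly ℓ bits, where ℓ ≤ n/2 and k ≤ n/2. Then for every t ≥ 0, the probability that y has at least t more one-bits than x equals the sum over i from ⌈(ℓ+t)/2⌉ to ℓ of C(k,i)·C(n-k,ℓ-i)/C(n,ℓ), and this sum is at most the sum over i from ⌈(ℓ+t)/2⌉ to ℓ of (2k·ℓ/((n-ℓ)·c·i))^i for an absolute constant c > 0 arising from i! ≥ (c·i)^i. -/

import Mathlib

/-!
Flipping the bits in `S` turns the set `T` of one-bits into `T ∆ S`, so the number of one-bits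
grows by `#(S \ T) - #(S ∩ T) = 2 #(S \ T) - ℓ`. Hence the gain is at least `t` exactly when `S`
contains at least `⌈(ℓ + t)/2⌉` zero-bits, and sorting the `ℓ`-sets by their number `i` of
zero-bits gives the hypergeometric sum. For its terms, `C(k,i) ≤ k^i / i!`, `i^i ≤ e^i i! ≤ 3^i i!`
and `C(n-k, ℓ-i) ≤ C(n, ℓ-i) ≤ C(n,ℓ) (ℓ/(n-ℓ))^i` give the bound `(3kℓ/((n-ℓ)i))^i`, which is the
stated one with `c = 2/3`.
-/

open Finset
open scoped symmDiff

namespace Finset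

variable {α : Type*} [DecidableEq α]

theorem card_symmDiff_add_card_inter (T S : Finset α) :
    #(T ∆ S) + #(S ∩ T) = #T + #(S \ T) := by
  rw [symmDiff_def, sup_eq_union, card_union_of_disjoint disjoint_sdiff_sdiff, inter_comm,
    ← card_sdiff_add_card_inter T S]
  ring

theorem add_le_card_symmDiff_iff {T S : Finset α} {ℓ : ℕ} (hS : #S = ℓ) (t : ℕ) :
    #T + t ≤ #(T ∆ S) ↔ (ℓ + t + 1) / 2 ≤ #(S \ T) := by
  have := card_symmDiff_add_card_inter T S
  have := card_sdiff_add_card_inter S T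
  omega

variable [Fintype α]

theorem filter_flip_eq_symmDiff (x : α → Bool) (S : Finset α) :
    ({j | (if j ∈ S then !x j else x j) = true} : Finset α) =
      ({j | x j = true} : Finset α) ∆ S := by
  ext j
  by_cases hj : j ∈ S <;> simp [mem_symmDiff, hj]

theorem card_powersetCard_filter_card_inter_eq (Z : Finset α) {ℓ i : ℕ} (hi : i ≤ ℓ) :
    #{S ∈ (univ : Finset α).powersetCard ℓ | #(S ∩ Z) = i} =
      (#Z).choose i * (#Zᶜ).choose (ℓ - i) := by
  rw [← card_powersetCard, ← card_powersetCard, ← card_product]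
  refine card_nbij' (fun S => (S ∩ Z, S \ Z)) (fun p => p.1 ∪ p.2) ?_ ?_ ?_ ?_
  · intro S hS
    simp only [coe_filter, mem_powersetCard, subset_univ, true_and, Set.mem_ofPred_eq] at hS
    have := card_sdiff_add_card_inter S Z
    simp only [mem_coe, mem_product, mem_powersetCard, inter_subset_right, true_and]
    exact ⟨hS.2, fun j hj => by simp_all, by omega⟩
  · rintro ⟨A, B⟩ h
    simp only [mem_coe, mem_product, mem_powersetCard] at h
    obtain ⟨⟨hAZ, hA⟩, hBZ, hB⟩ := h
    have hBZ : Disjoint B Z := disjoint_of_subset_left hBZ disjoint_compl_left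
    have hAB : (A ∪ B) ∩ Z = A := by
      rw [union_inter_distrib_right, inter_eq_left.mpr hAZ, disjoint_iff_inter_eq_empty.mp hBZ,
        union_empty]
    simp only [coe_filter, mem_powersetCard, subset_univ, true_and, Set.mem_ofPred_eq, hAB,
      card_union_of_disjoint (disjoint_of_subset_left hAZ hBZ.symm)]
    omega
  · intro S _
    ext j
    simp only [mem_union, mem_inter, mem_sdiff]
    tauto
  · rintro ⟨A, B⟩ h
    simp only [mem_coe, mem_product, mem_powersetCard] at h
    obtain ⟨⟨hAZ, -⟩, hBZ, -⟩ := h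
    ext j <;> simp only [mem_inter, mem_sdiff, mem_union] <;> grind [mem_compl]

theorem card_powersetCard_filter_le_card_inter (Z : Finset α) (ℓ m : ℕ) :
    #{S ∈ (univ : Finset α).powersetCard ℓ | m ≤ #(S ∩ Z)} =
      ∑ i ∈ Icc m ℓ, (#Z).choose i * (#Zᶜ).choose (ℓ - i) := by
  rw [card_eq_sum_card_fiberwise (f := fun S => #(S ∩ Z)) (t := Icc m ℓ)]
  · refine sum_congr rfl fun i hi => ?_
    rw [filter_filter, ← card_powersetCard_filter_card_inter_eq Z (mem_Icc.1 hi).2]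
    exact congrArg card
      (filter_congr fun S _ => and_iff_right_of_imp fun h => h ▸ (mem_Icc.1 hi).1)
  · intro S hS
    simp only [coe_filter, mem_powersetCard, subset_univ, true_and, Set.mem_ofPred_eq] at hS
    exact mem_Icc.2 ⟨hS.2, hS.1 ▸ card_le_card inter_subset_left⟩

end Finset

namespace Nat

theorem choose_mul_sub_le_choose_succ_mul {n j ℓ : ℕ} (hj : j < ℓ) :
    n.choose j * (n - ℓ) ≤ n.choose (j + 1) * ℓ := by
  refine Nat.le_of_mul_le_mul_right ?_ j.succ_pos
  calc n.choose j * (n - ℓ) * (j + 1) = n.choose j * ((n - ℓ) * (j + 1)) := by ring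
    _ ≤ n.choose j * ((n - j) * ℓ) := Nat.mul_le_mul_left _ (Nat.mul_le_mul (by omega) hj)
    _ = n.choose (j + 1) * ℓ * (j + 1) := by rw [← mul_assoc, ← choose_succ_right_eq]; ring

theorem choose_sub_mul_pow_le {n ℓ i : ℕ} (hi : i ≤ ℓ) :
    n.choose (ℓ - i) * (n - ℓ) ^ i ≤ n.choose ℓ * ℓ ^ i := by
  induction i with
  | zero => simp
  | succ i ih =>
    have step := choose_mul_sub_le_choose_succ_mul (n := n) (show ℓ - (i + 1) < ℓ by omega)
    rw [show ℓ - (i + 1) + 1 = ℓ - i by omega] at step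
    calc n.choose (ℓ - (i + 1)) * (n - ℓ) ^ (i + 1)
        = n.choose (ℓ - (i + 1)) * (n - ℓ) * (n - ℓ) ^ i := by ring
      _ ≤ n.choose (ℓ - i) * ℓ * (n - ℓ) ^ i := Nat.mul_le_mul_right _ step
      _ = n.choose (ℓ - i) * (n - ℓ) ^ i * ℓ := by ring
      _ ≤ n.choose ℓ * ℓ ^ i * ℓ := Nat.mul_le_mul_right _ (ih (by omega))
      _ = n.choose ℓ * ℓ ^ (i + 1) := by ring

theorem choose_sub_le_choose_mul_div_pow {n ℓ i : ℕ} (hi : i ≤ ℓ) (hℓ : ℓ < n) :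
    (n.choose (ℓ - i) : ℝ) ≤ n.choose ℓ * (ℓ / (n - ℓ)) ^ i := by
  have hnℓ : (0 : ℝ) < n - ℓ := by rw [sub_pos]; exact_mod_cast hℓ
  rw [div_pow, mul_div_assoc', le_div_iff₀ (by positivity), ← Nat.cast_sub hℓ.le]
  exact_mod_cast choose_sub_mul_pow_le hi

end Nat

theorem pow_self_div_factorial_le_three_pow (i : ℕ) : (i : ℝ) ^ i / i.factorial ≤ 3 ^ i :=
  calc (i : ℝ) ^ i / i.factorial ≤ Real.exp i := Real.pow_div_factorial_le_exp _ i.cast_nonneg i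
    _ = Real.exp 1 ^ i := by rw [← Real.exp_nat_mul, mul_one]
    _ ≤ 3 ^ i := by gcongr; exact Real.exp_one_lt_three.le

theorem choose_mul_choose_div_choose_le {n k ℓ i : ℕ} (hi : i ≤ ℓ) (h : ℓ < n ∨ i = 0) :
    (k.choose i : ℝ) * ((n - k).choose (ℓ - i) : ℝ) / n.choose ℓ ≤
      (3 * k * ℓ / ((n - ℓ) * i)) ^ i := by
  obtain rfl | hi0 := i.eq_zero_or_pos
  · simpa using div_le_one_of_le₀ (mod_cast Nat.choose_le_choose ℓ (n.sub_le k)) (by positivity)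
  have hℓ : ℓ < n := h.resolve_right hi0.ne'
  have hnℓ : (0 : ℝ) < n - ℓ := by rw [sub_pos]; exact_mod_cast hℓ
  have hC : (0 : ℝ) < n.choose ℓ := mod_cast Nat.choose_pos hℓ.le
  have hfact : ((i.factorial : ℕ) : ℝ)⁻¹ ≤ 3 ^ i / (i : ℝ) ^ i := by
    rw [le_div_iff₀ (pow_pos (Nat.cast_pos.2 hi0) i), ← div_eq_inv_mul]
    exact pow_self_div_factorial_le_three_pow i
  calc (k.choose i : ℝ) * ((n - k).choose (ℓ - i) : ℝ) / n.choose ℓ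
      ≤ (k ^ i / i.factorial) * (n.choose ℓ * (ℓ / (n - ℓ)) ^ i) / n.choose ℓ := by
        gcongr
        · exact Nat.choose_le_pow_div i k
        · exact (Nat.cast_le.2 (Nat.choose_le_choose _ (n.sub_le k))).trans
            (Nat.choose_sub_le_choose_mul_div_pow hi hℓ)
    _ = k ^ i * (i.factorial : ℝ)⁻¹ * (ℓ / (n - ℓ)) ^ i := by field_simp
    _ ≤ k ^ i * (3 ^ i / (i : ℝ) ^ i) * (ℓ / (n - ℓ)) ^ i := by gcongr
    _ = (3 * k * ℓ / ((n - ℓ) * i)) ^ i := by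
        rw [div_pow, div_pow, mul_pow, mul_pow, mul_pow]; ring

open Finset in
/-- Flipping a uniformly random set of exactly `ℓ` bits of a string `x` with `k`
zero-bits: the probability of gaining at least `t` one-bits equals the hypergeometric
sum, which is bounded by the stated exponential sum. -/
theorem stmt2 :
    ∃ c : ℝ, 0 < c ∧ ∀ (n k ℓ t : ℕ) (x : Fin n → Bool),
      2 * ℓ ≤ n → 2 * k ≤ n →
      (Finset.univ.filter fun j => x j = false).card = k →
      (((((Finset.univ : Finset (Fin n)).powersetCard ℓ).filter fun S =>
          (Finset.univ.filter fun j => x j = true).card + t ≤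
            (Finset.univ.filter fun j => (if j ∈ S then !x j else x j) = true).card).card : ℝ)
          / (n.choose ℓ) =
        ∑ i ∈ Finset.Icc ((ℓ + t + 1) / 2) ℓ,
          ((k.choose i : ℝ) * ((n - k).choose (ℓ - i) : ℝ)) / (n.choose ℓ)) ∧
      ∑ i ∈ Finset.Icc ((ℓ + t + 1) / 2) ℓ,
          ((k.choose i : ℝ) * ((n - k).choose (ℓ - i) : ℝ)) / (n.choose ℓ) ≤
        ∑ i ∈ Finset.Icc ((ℓ + t + 1) / 2) ℓ,
          (2 * (k : ℝ) * ℓ / (((n : ℝ) - ℓ) * (c * i))) ^ i := by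
  refine ⟨2 / 3, by norm_num, fun n k ℓ t x hℓ _ hk => ⟨?_, ?_⟩⟩
  · set Z : Finset (Fin n) := {j | x j = false}
    have hones : ({j | x j = true} : Finset (Fin n)) = Zᶜ := by ext; simp [Z]
    rw [filter_congr fun S hS => by
      rw [filter_flip_eq_symmDiff, hones, add_le_card_symmDiff_iff (mem_powersetCard.1 hS).2,
        sdiff_compl, inf_eq_inter],
      card_powersetCard_filter_le_card_inter, card_compl, hk, Fintype.card_fin]
    push_cast
    rw [sum_div]
  · have hc : ∀ d e : ℝ, 2 * (k : ℝ) * ℓ / (d * (2 / 3 * e)) = 3 * k * ℓ / (d * e) := by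
      intro d e; ring
    refine sum_le_sum fun i hi => ?_
    have hiℓ := (mem_Icc.1 hi).2
    rw [hc]
    exact choose_mul_choose_div_choose_le hiℓ (by omega)
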